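/- Let W be a finite Coxeter group, L ⊆ K ⊆ S, and x ∈ Y_K ∩ X_L^♯. Then the element w_L · w_{L ∪ (S \ K)} is a prefix of x, i.e. ℓ((w_L w_{L∪(S\K)})⁻¹ x) = ℓ(x) − ℓ(w_L w_{L∪(S\K)}). -/

import Mathlib

/-- The left descent set of `w`. -/
def CoxD {B W : Type*} [Group W] {M : CoxeterMatrix B} (cs : CoxeterSystem M W)
    (w : W) : Set B :=
  {s | cs.length (cs.simple s * w) < cs.length w}

/-- The set `X_L = {x : ℓ(sx) > ℓ(x) for all s ∈ L}`. -/
def CoxX {B W : Type*} [Group W] {M : CoxeterMatrix B} (cs : CoxeterSystem M W)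
    (L : Set B) : Set W :=
  {x | ∀ s ∈ L, cs.length (cs.simple s * x) > cs.length x}

/-- `X_L^♯ = {x ∈ X_L : x⁻¹ L x ⊆ S}`. -/
def CoxXsharp {B W : Type*} [Group W] {M : CoxeterMatrix B} (cs : CoxeterSystem M W)
    (L : Set B) : Set W :=
  {x | x ∈ CoxX cs L ∧ ∀ s ∈ L, ∃ t, x⁻¹ * cs.simple s * x = cs.simple t}

/-- The standard parabolic subgroup `W_J`. -/
def CoxParabolic {B W : Type*} [Group W] {M : CoxeterMatrix B} (cs : CoxeterSystem M W)
    (J : Set B) : Subgroup W :=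
  Subgroup.closure (cs.simple '' J)

/-! Let `(t, ε) ↦ (s t s, ε + [t = s])` define an action of the simple reflections on `W × ZMod 2`.
It satisfies the Coxeter relations, so it extends to `W`, and a word for `w` then sends `(t, 0)`
to `(w t w⁻¹, ε)` where `ε` is the parity of the number of occurrences of `t` in the right
inversion sequence of that word. So this parity depends only on `w`. It is a cocycle, and for a
reflection `t` it is `1` exactly when `ℓ(w t) < ℓ w`. This gives the exchange and deletion
conditions. For `J ⊆ S` they show that lengths add in `v z` when `v ∈ W_J` and `z` has no left
descent in `J`, and that every `u ∈ W_J` is a prefix of any `g` having all of `J` as left descents.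

Put `y = w_L⁻¹ x`. Then `ℓ y = ℓ w_L + ℓ x` because `x ∈ X_L`. Every `s ∈ L` is a left descent of
`y`, since `w_L` is longest in `W_L`. Every `s ∉ K` is one too: `y = (s x) · (x⁻¹ w_L⁻¹ x)`, and
the conjugate is no longer than `w_L` because `x⁻¹ L x ⊆ S`. Hence `w_{L ∪ (S∖K)}` is a prefix of
`y`, `w_L⁻¹` is a prefix of `w_{L ∪ (S∖K)}`, and the two length identities combine. -/

theorem ZMod.eq_zero_of_ne_one {a : ZMod 2} (h : a ≠ 1) : a = 0 := by
  revert a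
  decide

namespace CoxeterSystem

open scoped Classical

variable {B W : Type*} [Group W] {M : CoxeterMatrix B} (cs : CoxeterSystem M W)

local prefix:100 "s " => cs.simple
local prefix:100 "π " => cs.wordProd
local prefix:100 "ℓ " => cs.length
local prefix:100 "ris " => cs.rightInvSeq

theorem simple_mul_mul_simple_eq_iff (i : B) (x y : W) :
    s i * x * s i = y ↔ x = s i * y * s i := by
  constructor <;> rintro rfl <;> simp [mul_assoc]

noncomputable def reflRepSimple (i : B) : Equiv.Perm (W × ZMod 2) :=
  Function.Involutive.toPerm
    (fun p => (s i * p.1 * s i, p.2 + if p.1 = s i then 1 else 0)) <| by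
    rintro ⟨t, ε⟩
    ext
    · simp [mul_assoc]
    · simp only [simple_mul_mul_simple_eq_iff, simple_mul_simple_cancel_right, add_assoc,
        CharTwo.add_self_eq_zero, add_zero]

theorem reflRepSimple_apply (i : B) (t : W) (ε : ZMod 2) :
    cs.reflRepSimple i (t, ε) = (s i * t * s i, ε + if t = s i then 1 else 0) := rfl

theorem prod_map_reflRepSimple_apply (ω : List B) (t : W) (ε : ZMod 2) :
    (ω.map cs.reflRepSimple).prod (t, ε) = (π ω * t * (π ω)⁻¹, ε + (ris ω).count t) := by
  induction ω generalizing ε with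
  | nil => simp
  | cons i ω ih =>
    have hconj : π ω * t * (π ω)⁻¹ = s i ↔ (π ω)⁻¹ * s i * π ω = t := by
      constructor <;> intro h <;> rw [← h] <;> group
    simp only [List.map_cons, List.prod_cons, Equiv.Perm.mul_apply, ih, reflRepSimple_apply,
      rightInvSeq, List.count_cons, wordProd_cons, hconj, beq_iff_eq, mul_inv_rev, inv_simple]
    ext
    · simp [mul_assoc]
    · push_cast
      ring

theorem reflRepSimple_mul_reflRepSimple_pow_apply (i j : B) (m : ℕ) (t : W) (ε : ZMod 2) :
    ((cs.reflRepSimple i * cs.reflRepSimple j) ^ m) (t, ε) =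
      ((s i * s j) ^ m * t * ((s i * s j) ^ m)⁻¹,
        ε + ∑ k ∈ Finset.range (2 * m), if t = (s j * s i) ^ k * s j then 1 else 0) := by
  have hconj (x y : W) : s i * (s j * x * s j) * s i = y ↔ x = s j * s i * y * (s i * s j) := by
    constructor <;> rintro rfl <;> simp [mul_assoc]
  have hshift (k : ℕ) :
      s j * s i * ((s j * s i) ^ k * s j) * (s i * s j) = (s j * s i) ^ (k + 2) * s j := by
    rw [pow_succ, pow_succ']
    simp only [mul_assoc]
  induction m generalizing t ε with
  | zero => simp
  | succ m ih =>
    rw [pow_succ, Equiv.Perm.mul_apply, Equiv.Perm.mul_apply, reflRepSimple_apply,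
      reflRepSimple_apply, ih,
      show 2 * (m + 1) = 2 * m + 1 + 1 by ring, Finset.sum_range_succ', Finset.sum_range_succ']
    simp only [hconj, hshift]
    ext
    · simp [pow_succ, mul_assoc]
    · simp only [cs.simple_mul_mul_simple_eq_iff j t, zero_add, pow_one, pow_zero, one_mul]
      ring

theorem isLiftable_reflRepSimple : M.IsLiftable cs.reflRepSimple := by
  intro i j
  ext ⟨t, ε⟩ : 1
  -- since `(s j * s i) ^ M i j = 1`, the `2 * M i j` summands are two copies of the first `M i j`
  rw [reflRepSimple_mul_reflRepSimple_pow_apply, simple_mul_simple_pow, two_mul,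
    Finset.sum_range_add]
  simp [pow_add, CharTwo.add_self_eq_zero]

noncomputable def reflRep : W →* Equiv.Perm (W × ZMod 2) :=
  cs.lift ⟨cs.reflRepSimple, cs.isLiftable_reflRepSimple⟩

noncomputable def reflParity (w t : W) : ZMod 2 := (cs.reflRep w (t, 0)).2

theorem reflRep_wordProd (ω : List B) : cs.reflRep (π ω) = (ω.map cs.reflRepSimple).prod := by
  rw [wordProd, map_list_prod, List.map_map]
  congr 1
  exact List.map_congr_left fun i _ => cs.lift_apply_simple cs.isLiftable_reflRepSimple i

theorem reflParity_wordProd (ω : List B) (t : W) : cs.reflParity (π ω) t = (ris ω).count t := by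
  simp [reflParity, reflRep_wordProd, prod_map_reflRepSimple_apply]

theorem reflRep_apply (w t : W) (ε : ZMod 2) :
    cs.reflRep w (t, ε) = (w * t * w⁻¹, ε + cs.reflParity w t) := by
  obtain ⟨ω, rfl⟩ := cs.wordProd_surjective w
  rw [reflParity_wordProd, reflRep_wordProd, prod_map_reflRepSimple_apply]

theorem reflParity_mul (u v t : W) :
    cs.reflParity (u * v) t = cs.reflParity v t + cs.reflParity u (v * t * v⁻¹) := by
  rw [reflParity, map_mul, Equiv.Perm.mul_apply, reflRep_apply cs v, reflRep_apply, zero_add]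

theorem reflParity_self {t : W} (ht : cs.IsReflection t) : cs.reflParity t t = 1 := by
  obtain ⟨a, i, rfl⟩ := ht
  have h1 := cs.reflParity_mul (a * s i) a⁻¹ (a * s i * a⁻¹)
  have h2 := cs.reflParity_mul a (s i) (s i)
  have h3 := cs.reflParity_mul a⁻¹ a (s i)
  have hs : cs.reflParity (s i) (s i) = 1 := by
    simpa using cs.reflParity_wordProd [i] (s i)
  have h0 : cs.reflParity 1 (s i) = 0 := by simp [reflParity]
  simp only [inv_mul_cancel, inv_inv, inv_simple, simple_mul_simple_cancel_right] at h1 h2 h3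
  rw [show a⁻¹ * (a * s i * a⁻¹) * a = s i by group] at h1
  linear_combination h1 + h2 + hs - h3 + h0

theorem mem_rightInvSeq_of_reflParity_eq_one {ω : List B} {t : W}
    (h : cs.reflParity (π ω) t = 1) : t ∈ ris ω := by
  rw [reflParity_wordProd, ZMod.natCast_eq_one_iff_odd] at h
  exact List.count_pos_iff.mp h.pos

theorem reflParity_eq_one_iff {w t : W} (ht : cs.IsReflection t) :
    cs.reflParity w t = 1 ↔ ℓ (w * t) < ℓ w := by
  have hlt (w : W) (h : cs.reflParity w t = 1) : ℓ (w * t) < ℓ w := by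
    obtain ⟨ω, hω, rfl⟩ := cs.exists_isReduced w
    exact (cs.isRightInversion_of_mem_rightInvSeq hω (cs.mem_rightInvSeq_of_reflParity_eq_one h)).2
  refine ⟨hlt w, fun h => ?_⟩
  by_contra hne
  have hwt : cs.reflParity (w * t) t = 1 := by
    rw [reflParity_mul, reflParity_self cs ht, ht.mul_self, one_mul, ht.inv,
      ZMod.eq_zero_of_ne_one hne, add_zero]
  have := hlt _ hwt
  rw [mul_assoc, ht.mul_self, mul_one] at this
  omega

theorem length_mul_lt_iff_reflParity_inv {w t : W} (ht : cs.IsReflection t) :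
    ℓ (t * w) < ℓ w ↔ cs.reflParity w⁻¹ t = 1 := by
  rw [reflParity_eq_one_iff cs ht, ← cs.length_inv (t * w), ← cs.length_inv w, mul_inv_rev, ht.inv]

theorem length_mul_mul_lt_iff {t u v : W} (ht : cs.IsReflection t) (hu : ¬ ℓ (t * u) < ℓ u) :
    ℓ (t * (u * v)) < ℓ (u * v) ↔ ℓ (u⁻¹ * t * u * v) < ℓ v := by
  have ht' : cs.IsReflection (u⁻¹ * t * u) := by simpa using ht.conj u⁻¹
  have hu' : cs.reflParity u⁻¹ t = 0 :=
    ZMod.eq_zero_of_ne_one (mt (cs.length_mul_lt_iff_reflParity_inv ht).mpr hu)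
  rw [cs.length_mul_lt_iff_reflParity_inv ht, cs.length_mul_lt_iff_reflParity_inv ht',
    mul_inv_rev, reflParity_mul, inv_inv, hu', zero_add]

theorem exists_wordProd_eraseIdx_eq {ω : List B} {t : W} (ht : cs.IsReflection t)
    (h : ℓ (π ω * t) < ℓ (π ω)) : ∃ j < ω.length, π (ω.eraseIdx j) = π ω * t := by
  obtain ⟨j, hj, rfl⟩ := List.mem_iff_getElem.mp
    (cs.mem_rightInvSeq_of_reflParity_eq_one ((cs.reflParity_eq_one_iff ht).mpr h))
  refine ⟨j, by simpa using hj, ?_⟩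
  rw [← wordProd_mul_getD_rightInvSeq, List.getD_eq_getElem]

theorem exists_isReduced_sublist (ω : List B) :
    ∃ ω', ω'.Sublist ω ∧ cs.IsReduced ω' ∧ π ω' = π ω := by
  induction ω using List.reverseRecOn with
  | nil => exact ⟨[], List.Sublist.refl _, by simp [IsReduced], rfl⟩
  | append_singleton ω i ih =>
    obtain ⟨ω', hsub, hred, hprod⟩ := ih
    have hprod' : π (ω ++ [i]) = π ω' * s i := by simp [wordProd_append, hprod]
    rcases cs.length_mul_simple (π ω') i with hlong | hshort
    · refine ⟨ω' ++ [i], hsub.append_right _, ?_, by simp [wordProd_append, hprod]⟩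
      simp [IsReduced, wordProd_append, hlong, hred.eq]
    · obtain ⟨j, hj, hj'⟩ := cs.exists_wordProd_eraseIdx_eq (ω := ω')
        (cs.isReflection_simple i) (by omega)
      refine ⟨ω'.eraseIdx j, (List.eraseIdx_sublist _ _).trans
        (hsub.trans (List.sublist_append_left _ _)), ?_, by rw [hj', hprod']⟩
      rw [IsReduced, hj', List.length_eraseIdx_of_lt hj]
      have := hred.eq
      omega

variable {J : Set B}

theorem simple_mem_coxParabolic {i : B} (hi : i ∈ J) : s i ∈ CoxParabolic cs J :=
  Subgroup.subset_closure ⟨i, hi, rfl⟩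

theorem wordProd_mem_coxParabolic {ω : List B} (hω : ∀ i ∈ ω, i ∈ J) :
    π ω ∈ CoxParabolic cs J := by
  induction ω with
  | nil => exact one_mem _
  | cons i ω ih =>
    rw [wordProd_cons]
    exact mul_mem (cs.simple_mem_coxParabolic (hω i List.mem_cons_self))
      (ih fun j hj => hω j (List.mem_cons_of_mem i hj))

theorem exists_isReduced_of_mem_coxParabolic {u : W} (hu : u ∈ CoxParabolic cs J) :
    ∃ ω, (∀ i ∈ ω, i ∈ J) ∧ cs.IsReduced ω ∧ π ω = u := by
  have hword : ∃ ω : List B, (∀ i ∈ ω, i ∈ J) ∧ π ω = u := by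
    induction hu using Subgroup.closure_induction with
    | mem _ hx =>
      obtain ⟨i, hi, rfl⟩ := hx
      exact ⟨[i], by simpa using hi, by simp⟩
    | one => exact ⟨[], by simp, by simp⟩
    | mul _ _ _ _ hx hy =>
      obtain ⟨ω, hω, rfl⟩ := hx
      obtain ⟨ω', hω', rfl⟩ := hy
      exact ⟨ω ++ ω', by simpa [or_imp, forall_and] using ⟨hω, hω'⟩, wordProd_append _ _ _⟩
    | inv _ _ hx =>
      obtain ⟨ω, hω, rfl⟩ := hx
      exact ⟨ω.reverse, by simpa using hω, by simp⟩
  obtain ⟨ω, hω, rfl⟩ := hword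
  obtain ⟨ω', hsub, hred, hprod⟩ := cs.exists_isReduced_sublist ω
  exact ⟨ω', fun i hi => hω i (hsub.subset hi), hred, hprod⟩

@[elab_as_elim]
theorem coxParabolic_induction {motive : W → Prop} (one : motive 1)
    (simple_mul : ∀ i ∈ J, ∀ v ∈ CoxParabolic cs J,
      ℓ (s i * v) = ℓ v + 1 → motive v → motive (s i * v))
    {u : W} (hu : u ∈ CoxParabolic cs J) : motive u := by
  obtain ⟨ω, hω, hred, rfl⟩ := cs.exists_isReduced_of_mem_coxParabolic hu
  induction ω with
  | nil => simpa using one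
  | cons i ω ih =>
    have hω' : ∀ j ∈ ω, j ∈ J := fun j hj => hω j (List.mem_cons_of_mem i hj)
    have hred' : cs.IsReduced ω := by simpa using hred.drop 1
    have hlen : ℓ (s i * π ω) = ℓ (π ω) + 1 := by
      rw [← wordProd_cons, hred.eq, hred'.eq, List.length_cons]
    have hmem := cs.wordProd_mem_coxParabolic hω'
    rw [wordProd_cons]
    exact simple_mul i (hω i List.mem_cons_self) _ hmem hlen (ih hω' hred' hmem)

theorem exists_isLeftDescent_of_mem_coxParabolic {u : W} (hu : u ∈ CoxParabolic cs J)
    (hne : u ≠ 1) : ∃ i ∈ J, cs.IsLeftDescent u i := by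
  revert hne
  refine cs.coxParabolic_induction (by simp) (fun i hi v _ hlen _ _ => ⟨i, hi, ?_⟩) hu
  rw [IsLeftDescent, simple_mul_simple_cancel_left]
  omega

theorem isLeftDescent_of_forall_length_le {w : W} (hw : w ∈ CoxParabolic cs J)
    (hmax : ∀ u ∈ CoxParabolic cs J, ℓ u ≤ ℓ w) {i : B} (hi : i ∈ J) : cs.IsLeftDescent w i := by
  have := hmax _ (mul_mem (cs.simple_mem_coxParabolic hi) hw)
  rw [IsLeftDescent]
  rcases cs.length_simple_mul w i with h | h <;> omega

theorem length_inv_mul_mul_le {x u : W} (hx : ∀ i ∈ J, ∃ j, x⁻¹ * s i * x = s j)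
    (hu : u ∈ CoxParabolic cs J) : ℓ (x⁻¹ * u * x) ≤ ℓ u := by
  refine cs.coxParabolic_induction (motive := fun u => ℓ (x⁻¹ * u * x) ≤ ℓ u) (by simp) ?_ hu
  intro i hi v _ hlen ih
  obtain ⟨j, hj⟩ := hx i hi
  calc ℓ (x⁻¹ * (s i * v) * x) = ℓ (s j * (x⁻¹ * v * x)) := by rw [← hj]; group
    _ ≤ ℓ (s j) + ℓ (x⁻¹ * v * x) := cs.length_mul_le _ _
    _ ≤ ℓ (s i * v) := by rw [length_simple]; omega

theorem length_mul_eq_add_of_forall_length_le {z v : W}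
    (hz : ∀ u ∈ CoxParabolic cs J, ℓ z ≤ ℓ (u * z)) (hv : v ∈ CoxParabolic cs J) :
    ℓ (v * z) = ℓ v + ℓ z := by
  refine cs.coxParabolic_induction (motive := fun v => ℓ (v * z) = ℓ v + ℓ z) (by simp) ?_ hv
  intro i hi v hv hlen ih
  rcases cs.length_simple_mul (v * z) i with h | h
  · rw [mul_assoc, h, ih, hlen]
    ring
  · have hdesc : ℓ (s i * (v * z)) < ℓ (v * z) := by omega
    rw [cs.length_mul_mul_lt_iff (cs.isReflection_simple i) (by omega)] at hdesc
    have := hz _ (mul_mem (mul_mem (inv_mem hv) (cs.simple_mem_coxParabolic hi)) hv)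
    omega

theorem length_mul_eq_add_of_not_isLeftDescent {z v : W}
    (hz : ∀ i ∈ J, ¬ cs.IsLeftDescent z i) (hv : v ∈ CoxParabolic cs J) :
    ℓ (v * z) = ℓ v + ℓ z := by
  obtain ⟨u₀, hu₀, hmin⟩ := (InvImage.wf (fun u => ℓ (u * z)) wellFounded_lt).has_min
    (CoxParabolic cs J : Set W) ⟨1, one_mem _⟩
  have hadd : ∀ v ∈ CoxParabolic cs J, ℓ (v * (u₀ * z)) = ℓ v + ℓ (u₀ * z) :=
    fun v hv => cs.length_mul_eq_add_of_forall_length_le (fun u hu => by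
      simpa [mul_assoc] using not_lt.mp (hmin (u * u₀) (mul_mem hu hu₀))) hv
  obtain rfl : u₀ = 1 := by
    by_contra hne
    obtain ⟨i, hi, hdesc⟩ :=
      cs.exists_isLeftDescent_of_mem_coxParabolic (inv_mem hu₀) (inv_ne_one.mpr hne)
    apply hz i hi
    have h1 := hadd u₀⁻¹ (inv_mem hu₀)
    have h2 := hadd (s i * u₀⁻¹) (mul_mem (cs.simple_mem_coxParabolic hi) (inv_mem hu₀))
    simp only [inv_mul_cancel_left, mul_assoc] at h1 h2
    rw [IsLeftDescent] at hdesc ⊢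
    omega
  simpa using hadd v hv

theorem isLeftDescent_mul_of_not_isLeftDescent {z w : W} (hz : ∀ i ∈ J, ¬ cs.IsLeftDescent z i)
    (hw : w ∈ CoxParabolic cs J) {i : B} (hi : i ∈ J) (hwi : cs.IsLeftDescent w i) :
    cs.IsLeftDescent (w * z) i := by
  rw [IsLeftDescent, ← mul_assoc, cs.length_mul_eq_add_of_not_isLeftDescent hz hw,
    cs.length_mul_eq_add_of_not_isLeftDescent hz (mul_mem (cs.simple_mem_coxParabolic hi) hw)]
  exact Nat.add_lt_add_right hwi _

theorem isLeftDescent_mul_of_conj_simple {x u : W} (hx : ∀ i ∈ J, ∃ j, x⁻¹ * s i * x = s j)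
    (hu : u ∈ CoxParabolic cs J) (hux : ℓ (u * x) = ℓ u + ℓ x) {i : B}
    (hi : cs.IsLeftDescent x i) : cs.IsLeftDescent (u * x) i := by
  have hconj := cs.length_inv_mul_mul_le hx hu
  have htri := cs.length_mul_le (s i * x) (x⁻¹ * u * x)
  rw [show s i * x * (x⁻¹ * u * x) = s i * (u * x) by group] at htri
  rw [IsLeftDescent] at hi ⊢
  omega

theorem length_add_length_inv_mul_of_isLeftDescent {g u : W}
    (hg : ∀ i ∈ J, cs.IsLeftDescent g i) (hu : u ∈ CoxParabolic cs J) :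
    ℓ u + ℓ (u⁻¹ * g) = ℓ g := by
  refine cs.coxParabolic_induction (motive := fun u => ℓ u + ℓ (u⁻¹ * g) = ℓ g) (by simp) ?_ hu
  intro i hi v _ hlen ih
  have ht : cs.IsReflection (v⁻¹ * s i * v) := by simpa using (cs.isReflection_simple i).conj v⁻¹
  have hdrop : ℓ ((s i * v)⁻¹ * g) < ℓ (v⁻¹ * g) := by
    have key := cs.length_mul_mul_lt_iff (u := v⁻¹) (v := g) ht (by
      rw [show v⁻¹ * s i * v * v⁻¹ = (s i * v)⁻¹ by simp [mul_assoc], length_inv, length_inv]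
      omega)
    rw [show v⁻¹ * s i * v * (v⁻¹ * g) = (s i * v)⁻¹ * g by simp [mul_assoc],
      show v⁻¹⁻¹ * (v⁻¹ * s i * v) * v⁻¹ * g = s i * g by group] at key
    exact key.mpr (hg i hi)
  have htri := cs.length_mul_le (s i * v) ((s i * v)⁻¹ * g)
  rw [mul_inv_cancel_left] at htri
  omega

end CoxeterSystem

theorem stmt10_general {B W : Type*} [Group W]
    {M : CoxeterMatrix B} (cs : CoxeterSystem M W) (L K : Set B)
    (wL wLK : W)
    (hwL : wL ∈ CoxParabolic cs L ∧
      ∀ u ∈ CoxParabolic cs L, cs.length u ≤ cs.length wL)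
    (hwLK : wLK ∈ CoxParabolic cs (L ∪ Kᶜ) ∧
      ∀ u ∈ CoxParabolic cs (L ∪ Kᶜ), cs.length u ≤ cs.length wLK)
    (x : W) (hx : CoxD cs x = Kᶜ) (hx' : x ∈ CoxXsharp cs L) :
    cs.length (wL * wLK) + cs.length ((wL * wLK)⁻¹ * x) = cs.length x := by
  obtain ⟨hwL, hwLmax⟩ := hwL
  obtain ⟨hwLK, hwLKmax⟩ := hwLK
  obtain ⟨hxL, hxconj⟩ := hx'
  have hxL' : ∀ i ∈ L, ¬ cs.IsLeftDescent x i := fun i hi => (hxL i hi).not_gt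
  have hwLinv : wL⁻¹ ∈ CoxParabolic cs L := inv_mem hwL
  have hy : cs.length (wL⁻¹ * x) = cs.length wL⁻¹ + cs.length x :=
    cs.length_mul_eq_add_of_not_isLeftDescent hxL' hwLinv
  have hdesc : ∀ i ∈ L ∪ Kᶜ, cs.IsLeftDescent (wL⁻¹ * x) i := by
    rintro i (hi | hi)
    · refine cs.isLeftDescent_mul_of_not_isLeftDescent hxL' hwLinv hi ?_
      exact cs.isLeftDescent_of_forall_length_le hwLinv (by simpa using hwLmax) hi
    · exact cs.isLeftDescent_mul_of_conj_simple hxconj hwLinv hy (by rwa [← hx] at hi)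
  have hWL : CoxParabolic cs L ≤ CoxParabolic cs (L ∪ Kᶜ) :=
    Subgroup.closure_mono (Set.image_mono Set.subset_union_left)
  have hwLK_prefix := cs.length_add_length_inv_mul_of_isLeftDescent hdesc hwLK
  have hwL_prefix := cs.length_add_length_inv_mul_of_isLeftDescent
    (fun i hi => cs.isLeftDescent_of_forall_length_le hwLK hwLKmax hi) (hWL hwLinv)
  rw [inv_inv] at hwL_prefix
  rw [mul_inv_rev, mul_assoc]
  omega

theorem stmt10 {B W : Type*} [Fintype B] [Group W] [Fintype W]
    {M : CoxeterMatrix B} (cs : CoxeterSystem M W) (L K : Set B) (hLK : L ⊆ K)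
    (wL wLK : W)
    (hwL : wL ∈ CoxParabolic cs L ∧
      ∀ u ∈ CoxParabolic cs L, cs.length u ≤ cs.length wL)
    (hwLK : wLK ∈ CoxParabolic cs (L ∪ Kᶜ) ∧
      ∀ u ∈ CoxParabolic cs (L ∪ Kᶜ), cs.length u ≤ cs.length wLK)
    (x : W) (hx : CoxD cs x = Kᶜ) (hx' : x ∈ CoxXsharp cs L) :
    cs.length (wL * wLK) + cs.length ((wL * wLK)⁻¹ * x) = cs.length x :=
  stmt10_general cs L K wL wLK hwL hwLK x hx hx'
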